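/- arXiv:2409.03486 — 2 statements merged into one kernel-verified Lean document; each statement's English description precedes it below -/
import Mathlib

section
/- Suppose the period τ is odd. Then ∏_{m=0}^{2τ−1} (√N + P_{m+1})/Q_{m+1} = p_{2τ−1} + q_{2τ−1}√N. Consequently, setting ω = ∏_{m=0}^{2τ−1} (√N + P_{m+1}) and ω̄ = ∏_{m=0}^{2τ−1} (−√N + P_{m+1}), one has ω/ω̄ = (p_{2τ−1} + q_{2τ−1}√N)². -/
/-!
Write `x_m = (√N + P_m) / Q_m` for the complete quotients and `x̄_m = (-√N + P_m) / Q_m` for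
their conjugates; both satisfy `(x_m - a_m) x_{m+1} = 1`. An infinite continued fraction with
partial quotients `≥ 1` has a unique value (two solutions of the recurrence are pushed apart by a
factor `≥ 4` every two steps, yet stay within distance `1`), so `x` inherits every period `T` of
`a`; by irrationality of `√N` so do `P` and `Q`, and `Q_{m+1} Q_m = N - P_{m+1}²` then forces
`Q_T = Q_0 = 1`, in particular `Q_{2τ} = 1`. The classical identities
`(p_{n-1} + q_{n-1} √N) ∏_{m<n} x̄_{m+1} = (-1)^n` and `Q_n ∏_{m<n} x_{m+1} x̄_{m+1} = (-1)^n`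
at `n = 2τ` show that `∏ x_{m+1}` and `p_{2τ-1} + q_{2τ-1} √N` are both inverse to `∏ x̄_{m+1}`.
-/

open Finset

theorem eq_of_forall_eq_add_inv {a x y : ℕ → ℝ} (ha : ∀ n, 1 ≤ a n)
    (hx : ∀ n, 0 < x n) (hy : ∀ n, 0 < y n)
    (hxa : ∀ n, x n = a n + (x (n + 1))⁻¹) (hya : ∀ n, y n = a n + (y (n + 1))⁻¹) :
    x 0 = y 0 := by
  have one_lt_of_eq_add_inv {z : ℕ → ℝ} (hz : ∀ n, 0 < z n)
      (hza : ∀ n, z n = a n + (z (n + 1))⁻¹) (n : ℕ) : 1 < z n := by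
    linarith [hza n, ha n, inv_pos.2 (hz (n + 1))]
  have hx1 := one_lt_of_eq_add_inv hx hxa
  have hy1 := one_lt_of_eq_add_inv hy hya
  have hdist (n : ℕ) : |x n - y n| < 1 := by
    have := inv_lt_one_of_one_lt₀ (hx1 (n + 1))
    have := inv_lt_one_of_one_lt₀ (hy1 (n + 1))
    rw [abs_sub_lt_iff]
    constructor <;> linarith [hxa n, hya n, inv_pos.2 (hx (n + 1)), inv_pos.2 (hy (n + 1))]
  -- `x n - y n = (y (n+1) - x (n+1)) / (x (n+1) * y (n+1))`: the distance is expanded at each step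
  have hstep (n : ℕ) : |x (n + 1) - y (n + 1)| = |x n - y n| * (x (n + 1) * y (n + 1)) := by
    have hx' := (hx (n + 1)).ne'
    have hy' := (hy (n + 1)).ne'
    rw [hxa n, hya n, ← abs_of_pos (mul_pos (hx (n + 1)) (hy (n + 1))), ← abs_mul, abs_sub_comm]
    congr 1
    field_simp
    ring
  have hpair {z : ℕ → ℝ} (hz : ∀ n, 0 < z n) (hza : ∀ n, z n = a n + (z (n + 1))⁻¹) (n : ℕ) :
      2 ≤ z n * z (n + 1) := by
    have hz1 := one_lt_of_eq_add_inv hz hza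
    have : z n * z (n + 1) = a n * z (n + 1) + 1 := by
      rw [hza n, add_mul, inv_mul_cancel₀ (hz (n + 1)).ne']
    nlinarith [ha n, hz1 (n + 1)]
  have hgrowth (k : ℕ) : 4 ^ k * |x 0 - y 0| ≤ |x (2 * k) - y (2 * k)| := by
    induction k with
    | zero => simp
    | succ k ih =>
      have h4 : 4 ≤ (x (2 * k + 1) * y (2 * k + 1)) * (x (2 * k + 2) * y (2 * k + 2)) := by
        nlinarith [hpair hx hxa (2 * k + 1), hpair hy hya (2 * k + 1)]
      rw [show 2 * (k + 1) = 2 * k + 1 + 1 by ring, hstep, hstep]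
      calc 4 ^ (k + 1) * |x 0 - y 0| = 4 * (4 ^ k * |x 0 - y 0|) := by ring
        _ ≤ (x (2 * k + 1) * y (2 * k + 1)) * (x (2 * k + 2) * y (2 * k + 2)) *
            |x (2 * k) - y (2 * k)| := by gcongr
        _ = _ := by ring
  by_contra hne
  have hpos : 0 < |x 0 - y 0| := abs_pos.2 (sub_ne_zero.2 hne)
  obtain ⟨k, hk⟩ := pow_unbounded_of_one_lt (|x 0 - y 0|⁻¹) (by norm_num : (1 : ℝ) < 4)
  have := (inv_lt_iff_one_lt_mul₀ hpos).1 hk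
  linarith [hgrowth k, hdist (2 * k)]

/-- For `r = √N` this is the complete quotient `(P_m + √N) / Q_m`; for `r = -√N` its conjugate. -/
noncomputable def completeQuotient (P Q : ℤ → ℤ) (r : ℝ) (m : ℤ) : ℝ := (r + P m) / Q m

section CompleteQuotient

variable {N : ℕ} {a P Q : ℤ → ℤ}

theorem Q_ne_zero_of_not_isSquare (hNsq : ¬ IsSquare N) (hQ0 : Q 0 = 1)
    (hQrec : ∀ m : ℤ, 0 ≤ m → Q (m + 1) * Q m = (N : ℤ) - P (m + 1) ^ 2) :
    ∀ m : ℤ, 0 ≤ m → Q m ≠ 0 := by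
  intro m hm
  induction m, hm using Int.leInduction with
  | base => simp [hQ0]
  | succ n hn _ =>
    intro hQ
    refine hNsq (Int.isSquare_natCast_iff.1 ⟨P (n + 1), ?_⟩)
    linarith [hQrec n hn, hQ ▸ zero_mul (Q n), sq (P (n + 1))]

theorem completeQuotient_sub_mul_succ {r : ℝ} (hr : r ^ 2 = N)
    (hQne : ∀ m : ℤ, 0 ≤ m → Q m ≠ 0)
    (hPrec : ∀ m : ℤ, 0 ≤ m → P (m + 1) = a m * Q m - P m)
    (hQrec : ∀ m : ℤ, 0 ≤ m → Q (m + 1) * Q m = (N : ℤ) - P (m + 1) ^ 2) (m : ℤ) (hm : 0 ≤ m) :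
    (completeQuotient P Q r m - a m) * completeQuotient P Q r (m + 1) = 1 := by
  have hP : (P (m + 1) : ℝ) = a m * Q m - P m := by exact_mod_cast hPrec m hm
  have hQ : (Q (m + 1) : ℝ) * Q m = N - (P (m + 1) : ℝ) ^ 2 := by exact_mod_cast hQrec m hm
  have hQm : (Q m : ℝ) ≠ 0 := Int.cast_ne_zero.2 (hQne m hm)
  have hQm' : (Q (m + 1) : ℝ) ≠ 0 := Int.cast_ne_zero.2 (hQne (m + 1) (by omega))
  unfold completeQuotient
  field_simp
  linear_combination (r + P (m + 1)) * hP + hr - hQ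

theorem prod_add_eq_prod_completeQuotient_mul (hQne : ∀ m : ℤ, 0 ≤ m → Q m ≠ 0) (r : ℝ) (n : ℕ) :
    ∏ m ∈ range n, (r + (P ((m : ℤ) + 1) : ℝ)) =
      (∏ m ∈ range n, completeQuotient P Q r (m + 1)) * ∏ m ∈ range n, (Q ((m : ℤ) + 1) : ℝ) := by
  rw [← prod_mul_distrib]
  refine prod_congr rfl fun m _ => ?_
  rw [completeQuotient, div_mul_cancel₀ _ (Int.cast_ne_zero.2 (hQne _ (by omega)))]

-- the norm `(P_m² - N) / Q_m²` of the complete quotient is `-Q_{m-1} / Q_m`, and these telescope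
theorem prod_completeQuotient_mul_neg_mul {r : ℝ} (hr : r ^ 2 = N) (hQ0 : Q 0 = 1)
    (hQne : ∀ m : ℤ, 0 ≤ m → Q m ≠ 0)
    (hQrec : ∀ m : ℤ, 0 ≤ m → Q (m + 1) * Q m = (N : ℤ) - P (m + 1) ^ 2) (n : ℕ) :
    (∏ m ∈ range n, completeQuotient P Q r (m + 1) * completeQuotient P Q (-r) (m + 1)) *
      Q n = (-1) ^ n := by
  induction n with
  | zero => simp [hQ0]
  | succ n ih =>
    have hQ' : (Q (n + 1) : ℝ) * Q n = N - (P (n + 1) : ℝ) ^ 2 := by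
      exact_mod_cast hQrec n (by omega)
    have hQn : (Q ((n : ℤ) + 1) : ℝ) ≠ 0 := Int.cast_ne_zero.2 (hQne _ (by omega))
    have hterm : completeQuotient P Q r (n + 1) * completeQuotient P Q (-r) (n + 1) *
        Q (n + 1) = -Q n := by
      unfold completeQuotient
      field_simp
      linear_combination hQ' - hr
    rw [prod_range_succ, pow_succ, ← ih]
    push_cast
    linear_combination (∏ m ∈ range n, completeQuotient P Q r (m + 1) *
      completeQuotient P Q (-r) (m + 1)) * hterm

end CompleteQuotient

theorem Irrational.eq_and_eq_of_add_intCast_div_eq {s : ℝ} (hs : Irrational s) {P Q P' Q' : ℤ}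
    (hQ : Q ≠ 0) (hQ' : Q' ≠ 0) (h : (s + P) / Q = (s + P') / Q') : P = P' ∧ Q = Q' := by
  rw [div_eq_div_iff (Int.cast_ne_zero.2 hQ) (Int.cast_ne_zero.2 hQ')] at h
  have hQQ' : Q = Q' := by
    by_contra hne
    refine (hs.mul_intCast (sub_ne_zero.2 hne)).ne_int (P * Q' - P' * Q) ?_
    push_cast
    linear_combination -h
  subst hQQ'
  refine ⟨?_, rfl⟩
  exact_mod_cast add_left_cancel (mul_right_cancel₀ (Int.cast_ne_zero.2 hQ) h)

section Convergents

variable {a p q : ℤ → ℤ} {y : ℤ → ℝ} {r : ℝ}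

theorem convergent_sub_mul_succ (hy0 : y 0 = r)
    (hy : ∀ m : ℤ, 0 ≤ m → (y m - a m) * y (m + 1) = 1)
    (hp1 : p (-1) = 1) (hp0 : p 0 = a 0) (hq1 : q (-1) = 0) (hq0 : q 0 = 1)
    (hprec : ∀ m : ℤ, 1 ≤ m → p m = a m * p (m - 1) + p (m - 2))
    (hqrec : ∀ m : ℤ, 1 ≤ m → q m = a m * q (m - 1) + q (m - 2)) :
    ∀ m : ℤ, 0 ≤ m → (p m - q m * r) * y (m + 1) = -(p (m - 1) - q (m - 1) * r) := by
  intro m hm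
  induction m, hm using Int.leInduction with
  | base =>
    have h := hy 0 le_rfl
    rw [hy0, zero_add] at h
    simp only [zero_add, zero_sub, hp0, hq0, hp1, hq1, Int.cast_one, Int.cast_zero]
    linear_combination -h
  | succ n hn ih =>
    have hpn : (p (n + 1) : ℝ) = a (n + 1) * p n + p (n - 1) := by
      exact_mod_cast (hprec (n + 1) (by omega)).trans (by ring_nf)
    have hqn : (q (n + 1) : ℝ) = a (n + 1) * q n + q (n - 1) := by
      exact_mod_cast (hqrec (n + 1) (by omega)).trans (by ring_nf)
    rw [add_sub_cancel_right]
    linear_combination y (n + 1 + 1) * ih - (p n - q n * r) * hy (n + 1) (by omega) +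
      y (n + 1 + 1) * hpn - r * y (n + 1 + 1) * hqn

theorem convergent_sub_mul_prod (hy0 : y 0 = r)
    (hy : ∀ m : ℤ, 0 ≤ m → (y m - a m) * y (m + 1) = 1)
    (hp1 : p (-1) = 1) (hp0 : p 0 = a 0) (hq1 : q (-1) = 0) (hq0 : q 0 = 1)
    (hprec : ∀ m : ℤ, 1 ≤ m → p m = a m * p (m - 1) + p (m - 2))
    (hqrec : ∀ m : ℤ, 1 ≤ m → q m = a m * q (m - 1) + q (m - 2)) (n : ℕ) :
    (p (n - 1) - q (n - 1) * r) * ∏ m ∈ range n, y (m + 1) = (-1) ^ n := by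
  induction n with
  | zero => simp [hp1, hq1]
  | succ n ih =>
    have h := convergent_sub_mul_succ hy0 hy hp1 hp0 hq1 hq0 hprec hqrec n (by omega)
    rw [prod_range_succ, pow_succ, ← ih]
    push_cast
    rw [add_sub_cancel_right]
    linear_combination (∏ m ∈ range n, y (m + 1)) * h

end Convergents

section Period

variable {N : ℕ} {a P Q : ℤ → ℤ}

theorem completeQuotient_sqrt_add_period (hNsq : ¬ IsSquare N) (hQ0 : Q 0 = 1)
    (ha : ∀ m : ℤ, 0 ≤ m → a m = ⌊((P m : ℝ) + Real.sqrt N) / (Q m : ℝ)⌋)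
    (hPrec : ∀ m : ℤ, 0 ≤ m → P (m + 1) = a m * Q m - P m)
    (hQrec : ∀ m : ℤ, 0 ≤ m → Q (m + 1) * Q m = (N : ℤ) - P (m + 1) ^ 2)
    {T : ℕ} (hT : ∀ n : ℤ, 1 ≤ n → a (n + T) = a n) :
    completeQuotient P Q (Real.sqrt N) (1 + T) = completeQuotient P Q (Real.sqrt N) 1 := by
  set x := completeQuotient P Q (Real.sqrt N)
  have hQne := Q_ne_zero_of_not_isSquare hNsq hQ0 hQrec
  have hkey : ∀ m : ℤ, 0 ≤ m → (x m - a m) * x (m + 1) = 1 :=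
    completeQuotient_sub_mul_succ (Real.sq_sqrt (Nat.cast_nonneg N)) hQne hPrec hQrec
  have hfloor (m : ℤ) (hm : 0 ≤ m) : a m = ⌊x m⌋ := by
    rw [ha m hm, add_comm]
    rfl
  have hfract_pos (m : ℤ) (hm : 0 ≤ m) : 0 < Int.fract (x m) :=
    Int.fract_pos.2 <| (((irrational_sqrt_natCast_iff.2 hNsq).add_intCast (P m)).div_intCast
      (hQne m hm)).ne_int _
  have hgt (m : ℤ) (hm : 1 ≤ m) : 1 < x m := by
    have h := hkey (m - 1) (by omega)
    rw [hfloor _ (by omega), Int.self_sub_floor, sub_add_cancel] at h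
    rw [eq_inv_of_mul_eq_one_right h]
    exact (one_lt_inv₀ (hfract_pos _ (by omega))).2 (Int.fract_lt_one _)
  have hrec (m : ℤ) (hm : 0 ≤ m) : x m = a m + (x (m + 1))⁻¹ := by
    rw [← eq_inv_of_mul_eq_one_left (hkey m hm)]
    ring
  have ha1 (m : ℤ) (hm : 1 ≤ m) : (1 : ℝ) ≤ a m := by
    rw [hfloor m (by omega)]
    exact_mod_cast Int.le_floor.2 (by exact_mod_cast (hgt m hm).le)
  refine eq_of_forall_eq_add_inv (a := fun k : ℕ => (a (1 + k) : ℝ))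
    (x := fun k : ℕ => x (1 + T + k)) (y := fun k : ℕ => x (1 + k))
    (fun k => ha1 _ (by omega)) (fun k => by linarith [hgt (1 + T + k) (by omega)])
    (fun k => by linarith [hgt (1 + k) (by omega)]) (fun k => ?_) (fun k => ?_)
  · rw [hrec _ (by omega), show (1 : ℤ) + T + k = 1 + k + T by ring, hT _ (by omega)]
    push_cast
    ring_nf
  · rw [hrec _ (by omega)]
    push_cast
    ring_nf

theorem Q_eq_one_of_period (hNsq : ¬ IsSquare N) (hQ0 : Q 0 = 1)
    (ha : ∀ m : ℤ, 0 ≤ m → a m = ⌊((P m : ℝ) + Real.sqrt N) / (Q m : ℝ)⌋)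
    (hPrec : ∀ m : ℤ, 0 ≤ m → P (m + 1) = a m * Q m - P m)
    (hQrec : ∀ m : ℤ, 0 ≤ m → Q (m + 1) * Q m = (N : ℤ) - P (m + 1) ^ 2)
    {T : ℕ} (hT : ∀ n : ℤ, 1 ≤ n → a (n + T) = a n) : Q T = 1 := by
  have hQne := Q_ne_zero_of_not_isSquare hNsq hQ0 hQrec
  obtain ⟨hP, hQ⟩ := (irrational_sqrt_natCast_iff.2 hNsq).eq_and_eq_of_add_intCast_div_eq
    (hQne _ (by omega)) (hQne 1 (by omega))
    (completeQuotient_sqrt_add_period hNsq hQ0 ha hPrec hQrec hT)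
  -- `Q_{T+1} Q_T = N - P_{T+1}^2 = N - P_1^2 = Q_1 Q_0`
  have hT1 := hQrec T (by omega)
  have h01 := hQrec 0 le_rfl
  rw [add_comm (T : ℤ) 1, hP, hQ] at hT1
  rw [zero_add, hQ0, mul_one] at h01
  exact mul_left_cancel₀ (hQne 1 (by omega)) (by rw [hT1, ← h01, mul_one])

end Period

theorem stmt_13_general
    (N : ℕ) (hNsq : ¬ IsSquare N)
    (a P Q : ℤ → ℤ)
    (hP0 : P 0 = 0) (hQ0 : Q 0 = 1)
    (ha : ∀ m : ℤ, 0 ≤ m → a m = ⌊((P m : ℝ) + Real.sqrt N) / (Q m : ℝ)⌋)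
    (hPrec : ∀ m : ℤ, 0 ≤ m → P (m + 1) = a m * Q m - P m)
    (hQrec : ∀ m : ℤ, 0 ≤ m → Q (m + 1) * Q m = (N : ℤ) - P (m + 1) ^ 2)
    (τ : ℕ)
    (hper : ∀ n : ℤ, 1 ≤ n → a (n + τ) = a n)
    (p q : ℤ → ℤ)
    (hp1 : p (-1) = 1) (hp0 : p 0 = a 0)
    (hq1 : q (-1) = 0) (hq0 : q 0 = 1)
    (hprec : ∀ m : ℤ, 1 ≤ m → p m = a m * p (m - 1) + p (m - 2))
    (hqrec : ∀ m : ℤ, 1 ≤ m → q m = a m * q (m - 1) + q (m - 2))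
    :
    (∏ m ∈ Finset.range (2 * τ),
        (Real.sqrt N + (P ((m : ℤ) + 1) : ℝ)) / (Q ((m : ℤ) + 1) : ℝ))
        = (p (2 * (τ : ℤ) - 1) : ℝ) + (q (2 * (τ : ℤ) - 1) : ℝ) * Real.sqrt N
      ∧ (∏ m ∈ Finset.range (2 * τ), (Real.sqrt N + (P ((m : ℤ) + 1) : ℝ)))
          / (∏ m ∈ Finset.range (2 * τ), (-Real.sqrt N + (P ((m : ℤ) + 1) : ℝ)))
        = ((p (2 * (τ : ℤ) - 1) : ℝ) + (q (2 * (τ : ℤ) - 1) : ℝ) * Real.sqrt N) ^ 2 := by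
  set s := Real.sqrt N
  have hs : s ^ 2 = N := Real.sq_sqrt (Nat.cast_nonneg N)
  have hQne := Q_ne_zero_of_not_isSquare hNsq hQ0 hQrec
  have hQ2τ : Q (2 * τ : ℕ) = 1 := Q_eq_one_of_period hNsq hQ0 ha hPrec hQrec fun n hn => by
    rw [Nat.cast_mul, Nat.cast_two, two_mul, ← add_assoc, hper _ (by omega), hper n hn]
  have hE := convergent_sub_mul_prod (y := completeQuotient P Q (-s)) (r := -s)
    (by simp [completeQuotient, hP0, hQ0])
    (completeQuotient_sub_mul_succ (by rwa [neg_sq]) hQne hPrec hQrec)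
    hp1 hp0 hq1 hq0 hprec hqrec (2 * τ)
  have hnorm := prod_completeQuotient_mul_neg_mul hs hQ0 hQne hQrec (2 * τ)
  rw [prod_mul_distrib, hQ2τ, Int.cast_one, mul_one] at hnorm
  simp only [pow_mul, neg_one_sq, one_pow, Nat.cast_mul, Nat.cast_ofNat] at hE hnorm
  rw [prod_add_eq_prod_completeQuotient_mul hQne, prod_add_eq_prod_completeQuotient_mul hQne,
    mul_div_mul_right _ _ (prod_ne_zero_iff.2 fun m _ => Int.cast_ne_zero.2 (hQne _ (by omega))),
    div_eq_iff (right_ne_zero_of_mul_eq_one hnorm)]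
  change ∏ m ∈ range (2 * τ), completeQuotient P Q s (m + 1) = _ ∧ _
  generalize ∏ m ∈ range (2 * τ), completeQuotient P Q s (m + 1) = Px at hnorm ⊢
  generalize ∏ m ∈ range (2 * τ), completeQuotient P Q (-s) (m + 1) = Pz at hE hnorm ⊢
  -- `Px` and `p + q s` are both inverse to `Pz`
  have hPx : Px = p (2 * τ - 1) + q (2 * τ - 1) * s := by
    linear_combination (p (2 * τ - 1) + q (2 * τ - 1) * s) * hnorm - Px * hE
  refine ⟨hPx, ?_⟩
  rw [← hPx]
  linear_combination -Px * hnorm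

theorem stmt_13
    (N : ℕ) (hN : 0 < N) (hNsq : ¬ IsSquare N)
    (a P Q : ℤ → ℤ)
    (hP0 : P 0 = 0) (hQ0 : Q 0 = 1)
    (ha : ∀ m : ℤ, 0 ≤ m → a m = ⌊((P m : ℝ) + Real.sqrt N) / (Q m : ℝ)⌋)
    (hPrec : ∀ m : ℤ, 0 ≤ m → P (m + 1) = a m * Q m - P m)
    (hQrec : ∀ m : ℤ, 0 ≤ m → Q (m + 1) * Q m = (N : ℤ) - P (m + 1) ^ 2)
    (τ : ℕ) (hτ : 0 < τ)
    (hper : ∀ n : ℤ, 1 ≤ n → a (n + τ) = a n)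
    (hmin : ∀ τ' : ℕ, 0 < τ' → (∀ n : ℤ, 1 ≤ n → a (n + τ') = a n) → τ ≤ τ')
    (p q : ℤ → ℤ)
    (hp1 : p (-1) = 1) (hp0 : p 0 = a 0)
    (hq1 : q (-1) = 0) (hq0 : q 0 = 1)
    (hprec : ∀ m : ℤ, 1 ≤ m → p m = a m * p (m - 1) + p (m - 2))
    (hqrec : ∀ m : ℤ, 1 ≤ m → q m = a m * q (m - 1) + q (m - 2))
    (hτodd : Odd τ)
    :
    (∏ m ∈ Finset.range (2 * τ),
        (Real.sqrt N + (P ((m : ℤ) + 1) : ℝ)) / (Q ((m : ℤ) + 1) : ℝ))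
        = (p (2 * (τ : ℤ) - 1) : ℝ) + (q (2 * (τ : ℤ) - 1) : ℝ) * Real.sqrt N
      ∧ (∏ m ∈ Finset.range (2 * τ), (Real.sqrt N + (P ((m : ℤ) + 1) : ℝ)))
          / (∏ m ∈ Finset.range (2 * τ), (-Real.sqrt N + (P ((m : ℤ) + 1) : ℝ)))
        = ((p (2 * (τ : ℤ) - 1) : ℝ) + (q (2 * (τ : ℤ) - 1) : ℝ) * Real.sqrt N) ^ 2 :=
  stmt_13_general N hNsq a P Q hP0 hQ0 ha hPrec hQrec τ hper p q hp1 hp0 hq1 hq0 hprec hqrec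
end

section
/- Suppose there exist primes p ≡ 5 (mod 8) and q ≡ 3 (mod 4) such that pq divides N. Then the period τ of the continued fraction expansion of √N is even and Q_{τ/2} ≠ 2 (so Q_{τ/2} is a divisor of 2N containing a nontrivial factor of N). -/
/-!
The complete quotients `x_m = (P_m + √N)/Q_m` satisfy `x_{m+1} = 1 / fract x_m`, and for `m ≥ 1`
their conjugates lie in `(-1, 0)`, which gives the backward formula
`a_m = ⌊(P_{m+1} + √N)/Q_m⌋` for `m ≥ 1`. An irrational number is the limit of the convergents
of its digits, so periodicity of the digits forces `x_{τ+1} = x_1`, hence `Q_τ = 1` and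
`P_τ = P_1`; from there the backward formula shows that `Q_m` and `P_{m+1}` are palindromic on
`[0, τ]`. In particular `P_{τ/2+1} = P_{τ/2}`, i.e. `2 P_{τ/2} = a_{τ/2} Q_{τ/2}`, which yields
`Q_{τ/2} ∣ 2N`. Finally `p_{m-1}^2 - N q_{m-1}^2 = (-1)^m Q_m` makes `(-1)^m Q_m` a square modulo
every divisor of `N`: for `m = τ` this excludes odd `τ`, as `-1` is not a square modulo
`s ≡ 3 (mod 4)`, and for `m = τ/2` it excludes `Q_m = 2`, as neither `2` nor `-2` is a square
modulo `r ≡ 5 (mod 8)`.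
-/

theorem GenContFract.eq_of_floor_eq {K : Type*} [Field K] [LinearOrder K] [IsStrictOrderedRing K]
    [FloorRing K] [Archimedean K] [TopologicalSpace K] [OrderTopology K] {u w : ℕ → K}
    (hu : ∀ n, u (n + 1) = (Int.fract (u n))⁻¹) (hw : ∀ n, w (n + 1) = (Int.fract (w n))⁻¹)
    (hfloor : ∀ n, ⌊u n⌋ = ⌊w n⌋) : u 0 = w 0 := by
  have hconvs : ∀ n k, (GenContFract.of (u k)).convs n = (GenContFract.of (w k)).convs n := by
    intro n
    induction n with
    | zero => intro k; simp [zeroth_conv_eq_h, of_h_eq_floor, hfloor]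
    | succ n ih => intro k; rw [convs_succ, convs_succ, ← hu, ← hw, ih, hfloor]
  have hw0 := of_convergence (w 0)
  rw [← funext (hconvs · 0)] at hw0
  exact tendsto_nhds_unique (of_convergence (u 0)) hw0

theorem Irrational.eq_of_add_div_eq_add_div {s : ℝ} (hs : Irrational s) {p q p' q' : ℤ}
    (hq : q ≠ 0) (hq' : q' ≠ 0) (h : (p + s) / q = (p' + s) / q') : p = p' ∧ q = q' := by
  rw [div_eq_div_iff (Int.cast_ne_zero.mpr hq) (Int.cast_ne_zero.mpr hq')] at h
  have hqq : q = q' := by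
    by_contra hne
    refine (hs.intCast_mul (sub_ne_zero.mpr hne)).ne_int (p * q' - p' * q) ?_
    push_cast
    linear_combination -h
  subst hqq
  refine ⟨?_, rfl⟩
  exact_mod_cast add_right_cancel (mul_right_cancel₀ (Int.cast_ne_zero.mpr hq) h)

theorem two_le_of_not_isSquare {N : ℕ} (hN : ¬IsSquare N) : 2 ≤ N := by
  by_contra! h
  interval_cases N
  exacts [hN ⟨0, rfl⟩, hN ⟨1, rfl⟩]

/-- `P m + ε` over `Q m`: with `ε = √N` the complete quotient `x_m`, with `ε = -√N` its
conjugate. -/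
noncomputable def complQuot (P Q : ℕ → ℤ) (ε : ℝ) (m : ℕ) : ℝ := (P m + ε) / Q m

structure IsSqrtContFrac (N : ℕ) (a P Q : ℕ → ℤ) : Prop where
  P_zero : P 0 = 0
  Q_zero : Q 0 = 1
  a_eq_floor : ∀ m, a m = ⌊complQuot P Q √N m⌋
  P_succ : ∀ m, P (m + 1) = a m * Q m - P m
  Q_succ_mul : ∀ m, Q (m + 1) * Q m = N - P (m + 1) ^ 2

-- `convNum a n = p_{n-1}` and `convDen a n = q_{n-1}`: the indexing starts at `p_{-1} = 1`,
-- `q_{-1} = 0`.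
def convNum (a : ℕ → ℤ) : ℕ → ℤ
  | 0 => 1
  | 1 => a 0
  | n + 2 => a (n + 1) * convNum a (n + 1) + convNum a n

def convDen (a : ℕ → ℤ) : ℕ → ℤ
  | 0 => 0
  | 1 => 1
  | n + 2 => a (n + 1) * convDen a (n + 1) + convDen a n

namespace IsSqrtContFrac

variable {N : ℕ} {a P Q : ℕ → ℤ} (h : IsSqrtContFrac N a P Q)
include h

theorem Q_dvd_two_mul {k : ℕ} (hk : P (k + 1) = P k) : Q k ∣ 2 * N :=
  ⟨2 * Q (k + 1) + a k * P k, by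
    linear_combination -2 * h.Q_succ_mul k + P k * h.P_succ k + (2 * P (k + 1) + P k) * hk⟩

variable (hN : ¬IsSquare N)
include hN

theorem Q_ne_zero : ∀ m, Q m ≠ 0
  | 0 => by simp [h.Q_zero]
  | m + 1 => by
    intro hQ
    have hsq : (N : ℤ) = P (m + 1) * P (m + 1) := by
      linear_combination -h.Q_succ_mul m + Q m * hQ
    exact hN ⟨(P (m + 1)).natAbs, by rw [← Int.natAbs_mul, ← hsq, Int.natAbs_natCast]⟩

theorem Q_add_two (m : ℕ) : Q (m + 2) = Q m + a (m + 1) * (P (m + 1) - P (m + 2)) := by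
  refine mul_right_cancel₀ (h.Q_ne_zero hN (m + 1)) ?_
  linear_combination h.Q_succ_mul (m + 1) - h.Q_succ_mul m +
    (P (m + 1) - P (m + 2)) * h.P_succ (m + 1)

theorem convNum_sq_sub (m : ℕ) :
    convNum a m ^ 2 - N * convDen a m ^ 2 = (-1) ^ m * Q m := by
  have hpair : ∀ m, (convNum a m ^ 2 - N * convDen a m ^ 2 = (-1) ^ m * Q m) ∧
      (convNum a (m + 1) ^ 2 - N * convDen a (m + 1) ^ 2 = (-1) ^ (m + 1) * Q (m + 1)) ∧
      (convNum a (m + 1) * convNum a m - N * convDen a (m + 1) * convDen a m =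
        (-1) ^ m * P (m + 1)) := by
    intro m
    induction m with
    | zero =>
      have hP1 : P 1 = a 0 := by simpa [h.P_zero, h.Q_zero] using h.P_succ 0
      have hQ1 := h.Q_succ_mul 0
      simp only [convNum, convDen, h.Q_zero, hP1] at hQ1 ⊢
      refine ⟨by ring, by linear_combination hQ1, by ring⟩
    | succ m ih =>
      obtain ⟨ih₀, ih₁, ih₂⟩ := ih
      refine ⟨ih₁, ?_, ?_⟩
      · simp only [convNum, convDen, show m + 1 + 1 = m + 2 from rfl]
        linear_combination a (m + 1) ^ 2 * ih₁ + 2 * a (m + 1) * ih₂ + ih₀ +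
          -(-1) ^ m * h.Q_add_two hN m + a (m + 1) * (-1) ^ m * h.P_succ (m + 1)
      · simp only [convNum, convDen]
        linear_combination a (m + 1) * ih₁ + ih₂ + (-1) ^ m * h.P_succ (m + 1)
  exact (hpair m).1

theorem isSquare_neg_one_pow_mul_Q {d : ℕ} (hd : d ∣ N) (m : ℕ) :
    IsSquare ((-1) ^ m * (Q m : ZMod d)) := by
  refine ⟨convNum a m, ?_⟩
  have := congrArg (Int.cast : ℤ → ZMod d) (h.convNum_sq_sub hN m)
  push_cast at this
  rw [← this, (ZMod.natCast_eq_zero_iff N d).mpr hd]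
  ring

theorem complQuot_succ_mul {ε : ℝ} (hε : ε ^ 2 = N) (m : ℕ) :
    complQuot P Q ε (m + 1) * (complQuot P Q ε m - a m) = 1 := by
  have hQm : (Q m : ℝ) ≠ 0 := by exact_mod_cast h.Q_ne_zero hN m
  have hQm1 : (Q (m + 1) : ℝ) ≠ 0 := by exact_mod_cast h.Q_ne_zero hN (m + 1)
  have hP : (P (m + 1) : ℝ) = a m * Q m - P m := by exact_mod_cast h.P_succ m
  have hQ : (Q (m + 1) : ℝ) * Q m = N - P (m + 1) ^ 2 := by exact_mod_cast h.Q_succ_mul m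
  unfold complQuot
  field_simp
  linear_combination (P (m + 1) + ε) * hP - hQ + hε

theorem complQuot_succ (m : ℕ) :
    complQuot P Q √N (m + 1) = (Int.fract (complQuot P Q √N m))⁻¹ := by
  rw [Int.fract, ← h.a_eq_floor]
  exact eq_inv_of_mul_eq_one_left (h.complQuot_succ_mul hN (Real.sq_sqrt N.cast_nonneg) m)

theorem one_le_a : ∀ m, 1 ≤ a m
  | 0 => by
    have hN1 : (1 : ℝ) ≤ N := by exact_mod_cast (two_le_of_not_isSquare hN).trans' one_le_two
    rw [h.a_eq_floor, complQuot, h.P_zero, h.Q_zero, Int.le_floor]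
    simpa using Real.one_le_sqrt.mpr hN1
  | m + 1 => by
    have hmul := h.complQuot_succ_mul hN (Real.sq_sqrt N.cast_nonneg) m
    rw [h.a_eq_floor m, ← Int.fract] at hmul
    rw [h.a_eq_floor, Int.le_floor]
    push_cast
    nlinarith [Int.fract_nonneg (complQuot P Q √N m), Int.fract_lt_one (complQuot P Q √N m)]

theorem conj_sub_a_lt_neg_one {m : ℕ} (hy : complQuot P Q (-√N) m < 0) :
    complQuot P Q (-√N) m - a m < -1 := by
  have ha : (1 : ℝ) ≤ a m := by exact_mod_cast h.one_le_a hN m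
  linarith

theorem conj_lt_zero (m : ℕ) : complQuot P Q (-√N) m < 0 := by
  have hε : (-√N) ^ 2 = N := by rw [neg_sq, Real.sq_sqrt N.cast_nonneg]
  induction m with
  | zero =>
    have := two_le_of_not_isSquare hN
    simp [complQuot, h.P_zero, h.Q_zero]
    omega
  | succ m ih =>
    rw [eq_inv_of_mul_eq_one_left (h.complQuot_succ_mul hN hε m)]
    exact inv_lt_zero.mpr (by linarith [h.conj_sub_a_lt_neg_one hN ih])

theorem neg_one_lt_conj_succ (m : ℕ) : -1 < complQuot P Q (-√N) (m + 1) := by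
  have hmul := h.complQuot_succ_mul hN (by rw [neg_sq, Real.sq_sqrt N.cast_nonneg]) m
  nlinarith [h.conj_sub_a_lt_neg_one hN (h.conj_lt_zero hN m), h.conj_lt_zero hN (m + 1)]

theorem a_succ_eq_floor (m : ℕ) : a (m + 1) = ⌊(P (m + 2) + √N) / Q (m + 1)⌋ := by
  have hQ : (Q (m + 1) : ℝ) ≠ 0 := by exact_mod_cast h.Q_ne_zero hN (m + 1)
  have hP : (P (m + 2) : ℝ) = a (m + 1) * Q (m + 1) - P (m + 1) := by
    exact_mod_cast h.P_succ (m + 1)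
  have hval : (P (m + 2) + √N) / Q (m + 1) = a (m + 1) - complQuot P Q (-√N) (m + 1) := by
    rw [complQuot, hP]
    field_simp
    ring
  rw [hval, eq_comm, Int.floor_eq_iff]
  constructor <;> linarith [h.conj_lt_zero hN (m + 1), h.neg_one_lt_conj_succ hN m]

theorem complQuot_period_add_one {τ : ℕ} (hper : ∀ n, 1 ≤ n → a (n + τ) = a n) :
    complQuot P Q √N (τ + 1) = complQuot P Q √N 1 := by
  refine GenContFract.eq_of_floor_eq (u := fun n => complQuot P Q √N (τ + 1 + n))
    (w := fun n => complQuot P Q √N (1 + n)) (fun n => h.complQuot_succ hN (τ + 1 + n))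
    (fun n => h.complQuot_succ hN (1 + n)) (fun n => ?_)
  simp only [← h.a_eq_floor, show τ + 1 + n = 1 + n + τ by ring]
  exact hper (1 + n) (by omega)

theorem Q_eq_one_and_P_eq_of_period {τ : ℕ} (hτ : 0 < τ)
    (hper : ∀ n, 1 ≤ n → a (n + τ) = a n) : Q τ = 1 ∧ P τ = P 1 := by
  obtain ⟨hP, hQ⟩ := (irrational_sqrt_natCast_iff.mpr hN).eq_of_add_div_eq_add_div
    (h.Q_ne_zero hN (τ + 1)) (h.Q_ne_zero hN 1) (h.complQuot_period_add_one hN hper)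
  have hQτ : Q τ = 1 := by
    refine mul_left_cancel₀ (h.Q_ne_zero hN (τ + 1)) ?_
    have hQ1 : Q 1 * Q 0 = N - P 1 ^ 2 := h.Q_succ_mul 0
    linear_combination h.Q_succ_mul τ - hQ1 - (P (τ + 1) + P 1) * hP + Q 1 * h.Q_zero - hQ
  refine ⟨hQτ, ?_⟩
  obtain ⟨t, rfl⟩ : ∃ t, τ = t + 1 := ⟨τ - 1, by omega⟩
  have hfloor := (h.a_succ_eq_floor hN t).symm.trans (h.a_eq_floor (t + 1))
  rw [complQuot, hQτ, hP] at hfloor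
  simpa [Int.floor_intCast_add] using hfloor.symm

theorem palindrome {T : ℕ} (hQ : Q T = Q 0) (hP : P T = P 1) (i : ℕ) :
    ∀ j, i + j + 1 = T → Q i = Q (j + 1) ∧ P (i + 1) = P (j + 1) := by
  induction i with
  | zero =>
    rintro j rfl
    exact ⟨by rw [← hQ, zero_add], by rw [← hP, zero_add]⟩
  | succ i ih =>
    intro j hij
    obtain ⟨hQi, hPi⟩ := ih (j + 1) (by omega)
    have hQ' : Q (i + 1) = Q (j + 1) := by
      refine mul_right_cancel₀ (h.Q_ne_zero hN i) ?_
      linear_combination h.Q_succ_mul i - h.Q_succ_mul (j + 1) -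
        (P (i + 1) + P (j + 1 + 1)) * hPi - Q (j + 1) * hQi
    have ha : a (i + 1) = a (j + 1) := by
      rw [h.a_eq_floor, h.a_succ_eq_floor hN, complQuot, hQ', hPi]
    refine ⟨hQ', ?_⟩
    linear_combination h.P_succ (i + 1) - h.P_succ (j + 1) + Q (i + 1) * ha +
      a (j + 1) * hQ' - hPi

end IsSqrtContFrac

theorem ZMod.not_isSquare_neg_one_pow_mul_two {r : ℕ} [Fact r.Prime] (hr : r % 8 = 5) (k : ℕ) :
    ¬IsSquare ((-1) ^ k * 2 : ZMod r) := by
  rcases Nat.even_or_odd k with hk | hk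
  · rw [hk.neg_one_pow, one_mul, ZMod.exists_sq_eq_two_iff (by omega)]
    omega
  · rw [hk.neg_one_pow, neg_one_mul, ZMod.exists_sq_eq_neg_two_iff (by omega)]
    omega

theorem stmt_16_general
    (N : ℕ) (hNsq : ¬ IsSquare N)
    (a P Q : ℤ → ℤ)
    (hP0 : P 0 = 0) (hQ0 : Q 0 = 1)
    (ha : ∀ m : ℤ, 0 ≤ m → a m = ⌊((P m : ℝ) + Real.sqrt N) / (Q m : ℝ)⌋)
    (hPrec : ∀ m : ℤ, 0 ≤ m → P (m + 1) = a m * Q m - P m)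
    (hQrec : ∀ m : ℤ, 0 ≤ m → Q (m + 1) * Q m = (N : ℤ) - P (m + 1) ^ 2)
    (τ : ℕ) (hτ : 0 < τ)
    (hper : ∀ n : ℤ, 1 ≤ n → a (n + τ) = a n)
    (hdvd : ∃ r s : ℕ, r.Prime ∧ s.Prime ∧ r % 8 = 5 ∧ s % 4 = 3 ∧ r * s ∣ N)
    :
    Even τ ∧ Q (((τ / 2 : ℕ) : ℤ)) ≠ 2 ∧ Q (((τ / 2 : ℕ) : ℤ)) ∣ 2 * (N : ℤ) := by
  have h : IsSqrtContFrac N (fun n : ℕ => a n) (fun n => P n) (fun n => Q n) :=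
    ⟨hP0, hQ0, fun m => ha m m.cast_nonneg, fun m => by exact_mod_cast hPrec m m.cast_nonneg,
      fun m => by exact_mod_cast hQrec m m.cast_nonneg⟩
  obtain ⟨hQτ, hPτ⟩ := h.Q_eq_one_and_P_eq_of_period hNsq hτ fun n hn => by
    exact_mod_cast hper n (by exact_mod_cast hn)
  obtain ⟨r, s, hr, hs, hr8, hs4, hrs⟩ := hdvd
  have := Fact.mk hr
  have := Fact.mk hs
  have hEven : Even τ := by
    by_contra hodd
    have hsq := h.isSquare_neg_one_pow_mul_Q hNsq (dvd_of_mul_left_dvd hrs) τ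
    rw [hQτ, Int.cast_one, mul_one, (Nat.not_even_iff_odd.mp hodd).neg_one_pow,
      ZMod.exists_sq_eq_neg_one_iff] at hsq
    exact hsq hs4
  obtain ⟨k, rfl⟩ := hEven
  obtain ⟨-, hPk⟩ := h.palindrome hNsq (hQτ.trans hQ0.symm) hPτ k (k - 1) (by omega)
  rw [Nat.sub_add_cancel (by omega)] at hPk
  rw [show (k + k) / 2 = k by omega]
  refine ⟨⟨k, rfl⟩, fun hQk => ?_, h.Q_dvd_two_mul hPk⟩
  have hsq := h.isSquare_neg_one_pow_mul_Q hNsq (dvd_of_mul_right_dvd hrs) k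
  rw [hQk] at hsq
  exact ZMod.not_isSquare_neg_one_pow_mul_two hr8 k (by exact_mod_cast hsq)

theorem stmt_16
    (N : ℕ) (hN : 0 < N) (hNsq : ¬ IsSquare N)
    (a P Q : ℤ → ℤ)
    (hP0 : P 0 = 0) (hQ0 : Q 0 = 1)
    (ha : ∀ m : ℤ, 0 ≤ m → a m = ⌊((P m : ℝ) + Real.sqrt N) / (Q m : ℝ)⌋)
    (hPrec : ∀ m : ℤ, 0 ≤ m → P (m + 1) = a m * Q m - P m)
    (hQrec : ∀ m : ℤ, 0 ≤ m → Q (m + 1) * Q m = (N : ℤ) - P (m + 1) ^ 2)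
    (τ : ℕ) (hτ : 0 < τ)
    (hper : ∀ n : ℤ, 1 ≤ n → a (n + τ) = a n)
    (hmin : ∀ τ' : ℕ, 0 < τ' → (∀ n : ℤ, 1 ≤ n → a (n + τ') = a n) → τ ≤ τ')
    (hdvd : ∃ r s : ℕ, r.Prime ∧ s.Prime ∧ r % 8 = 5 ∧ s % 4 = 3 ∧ r * s ∣ N)
    :
    Even τ ∧ Q (((τ / 2 : ℕ) : ℤ)) ≠ 2 ∧ Q (((τ / 2 : ℕ) : ℤ)) ∣ 2 * (N : ℤ) :=
  stmt_16_general N hNsq a P Q hP0 hQ0 ha hPrec hQrec τ hτ hper hdvd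
end
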